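/- arXiv:2002.08540 — 3 statements merged into one kernel-verified Lean document; each statement's English description precedes it below -/
import Mathlib

section
/- If E is a torsion-free virtually cyclic group, then E is cyclic. -/
/-- The old Mathlib definition: a monoid is torsion-free if no nontrivial element has finite order. -/
def Monoid.IsTorsionFree (G : Type*) [Monoid G] : Prop :=
  ∀ g : G, g ≠ 1 → ¬IsOfFinOrder g

/-!
Let `⟨a⟩` be a normal cyclic subgroup of finite index `m` (the normal core of the given one).
Conjugation by `x` sends `a` to some `a ^ j`, and `x ^ m = a ^ k`; since `x` commutes with
`x ^ m`, we get `a ^ (j * k) = a ^ k`, so torsion-freeness forces `j = 1`: `a` is central.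
The transfer to the central subgroup `⟨a⟩` is then `x ↦ x ^ m`, which is injective because
`E` is torsion-free, so `E` embeds into the cyclic group `⟨a⟩`.
-/

section

open Subgroup

variable {G : Type*} [Group G]

open scoped IsMulCommutative in
theorem MonoidHom.transfer_id_apply_of_le_center {P : Subgroup G} [IsMulCommutative P]
    [P.FiniteIndex] (hP : P ≤ center G) (g : G) :
    (transfer (MonoidHom.id P) g : G) = g ^ P.index := by
  refine congrArg Subtype.val (transfer_eq_pow _ g fun k g₀ hk => ?_)
  have hcomm := mem_center_iff.mp (hP hk) g₀
  calc g₀⁻¹ * g ^ k * g₀ = (g₀⁻¹ * g ^ k * g₀) * g₀ * g₀⁻¹ := by group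
    _ = g₀ * (g₀⁻¹ * g ^ k * g₀) * g₀⁻¹ := by rw [hcomm]
    _ = g ^ k := by group

namespace Monoid.IsTorsionFree

theorem eq_one_of_pow_eq_one (htf : IsTorsionFree G) {x : G} {n : ℕ} (hn : n ≠ 0)
    (h : x ^ n = 1) : x = 1 := by
  by_contra hx
  exact htf x hx (isOfFinOrder_iff_pow_eq_one.mpr ⟨n, Nat.pos_of_ne_zero hn, h⟩)

theorem zpow_injective (htf : IsTorsionFree G) {a : G} (ha : a ≠ 1) :
    Function.Injective (a ^ · : ℤ → G) :=
  injective_zpow_iff_not_isOfFinOrder.mpr (htf a ha)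

theorem mem_center_of_zpowers_normal (htf : IsTorsionFree G) (a : G) [(zpowers a).Normal]
    [(zpowers a).FiniteIndex] : a ∈ center G := by
  rw [mem_center_iff]
  intro x
  suffices hconj : x * a * x⁻¹ = a from mul_inv_eq_iff_eq_mul.mp hconj
  by_cases ha : a = 1
  · rw [ha, mul_one, mul_inv_cancel]
  obtain ⟨j, hj⟩ := mem_zpowers_iff.mp (‹(zpowers a).Normal›.conj_mem a (mem_zpowers a) x)
  obtain ⟨k, hk⟩ := mem_zpowers_iff.mp ((zpowers a).pow_index_mem x)
  have hfix : a ^ (j * k) = a ^ k :=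
    calc a ^ (j * k) = (x * a * x⁻¹) ^ k := by rw [zpow_mul, hj]
      _ = x * x ^ (zpowers a).index * x⁻¹ := by rw [conj_zpow, hk]
      _ = a ^ k := by rw [(Commute.self_pow x _).eq, mul_inv_cancel_right, hk]
  by_cases hk0 : k = 0
  · have hx : x = 1 := htf.eq_one_of_pow_eq_one FiniteIndex.index_ne_zero
      (by rw [← hk, hk0, zpow_zero])
    rw [hx, one_mul, inv_one, mul_one]
  · have hj1 : j = 1 := (mul_eq_right₀ hk0).mp (htf.zpow_injective ha hfix)
    rw [← hj, hj1, zpow_one]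

open scoped IsMulCommutative in
theorem isCyclic_of_mem_center (htf : IsTorsionFree G) {a : G} [(zpowers a).FiniteIndex]
    (ha : a ∈ center G) : IsCyclic G := by
  refine isCyclic_of_injective (MonoidHom.transfer (MonoidHom.id (zpowers a)))
    ((injective_iff_map_eq_one _).mpr fun g hg => htf.eq_one_of_pow_eq_one
      (FiniteIndex.index_ne_zero (H := zpowers a)) ?_)
  rw [← MonoidHom.transfer_id_apply_of_le_center (zpowers_le.mpr ha), hg, OneMemClass.coe_one]

theorem isCyclic_of_zpowers_normal (htf : IsTorsionFree G) (a : G) [(zpowers a).Normal]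
    [(zpowers a).FiniteIndex] : IsCyclic G :=
  htf.isCyclic_of_mem_center (htf.mem_center_of_zpowers_normal a)

end Monoid.IsTorsionFree

end

/-- A torsion-free virtually cyclic group is cyclic. -/
theorem torsionFree_virtuallyCyclic_isCyclic (E : Type*) [Group E]
    (hvc : ∃ H : Subgroup E, IsCyclic H ∧ H.FiniteIndex)
    (htf : Monoid.IsTorsionFree E) : IsCyclic E := by
  obtain ⟨H, hH, hHfin⟩ := hvc
  have : IsCyclic H.normalCore := Subgroup.isCyclic_of_le H.normalCore_le
  obtain ⟨a, ha⟩ := H.normalCore.isCyclic_iff_exists_zpowers_eq_top.mp this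
  have : (Subgroup.zpowers a).Normal := ha ▸ H.normalCore_normal
  have : (Subgroup.zpowers a).FiniteIndex := ha ▸ H.finiteIndex_normalCore
  exact htf.isCyclic_of_zpowers_normal a
end

section
/- Every infinite virtually cyclic group E contains normal subgroups T ≤ E⁺ ≤ E such that the index of E⁺ in E is at most 2, T is finite, and E⁺/T is isomorphic to ℤ. -/
/-!
Shrinking a finite-index cyclic subgroup to its normal core gives an infinite cyclic normal
subgroup `⟨z⟩` of finite index. Conjugation acts on `⟨z⟩` by an automorphism of `ℤ`, so every
conjugate of `z` is `z` or `z⁻¹`, and the centralizer `E⁺` of `z` has index at most `2`. In `E⁺`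
the subgroup `⟨z⟩` is central of finite index `n`, so the transfer `E⁺ → ⟨z⟩ ≅ ℤ` is
`g ↦ g ^ n`. It is injective on `⟨z⟩`, hence has finite kernel `T` and infinite cyclic image;
`T` consists of the elements of finite order of `E⁺`, so it is normal in `E`.
-/

open Subgroup

section

variable {G : Type*} [Group G]

theorem Subgroup.finite_of_disjoint_of_finiteIndex {H K : Subgroup G} [H.FiniteIndex]
    (h : Disjoint H K) : Finite K := by
  have hbot : (H.subgroupOf K).index ≠ 0 := FiniteIndex.index_ne_zero
  rw [subgroupOf_eq_bot.mpr h, index_bot] at hbot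
  exact Nat.finite_of_card_ne_zero hbot

theorem Subgroup.subgroupOf_centralizer_le_center (H : Subgroup G) :
    H.subgroupOf (centralizer (H : Set G)) ≤ center (centralizer (H : Set G)) := fun x hx =>
  mem_center_iff.mpr fun y => Subtype.ext (y.2 x hx).symm

theorem exists_not_isOfFinOrder_zpowers_normal_finiteIndex [Infinite G] (H : Subgroup G)
    [IsCyclic H] [H.FiniteIndex] :
    ∃ z : G, ¬IsOfFinOrder z ∧ (zpowers z).Normal ∧ (zpowers z).FiniteIndex := by
  have : IsCyclic H.normalCore := isCyclic_of_le H.normalCore_le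
  obtain ⟨z, hz⟩ := (H.normalCore.isCyclic_iff_exists_zpowers_eq_top).mp this
  have hfi : (zpowers z).FiniteIndex := hz ▸ H.finiteIndex_normalCore
  refine ⟨z, fun hfin => ?_, hz ▸ H.normalCore_normal, hfi⟩
  have : Finite (zpowers z) := (finite_zpowers.mpr hfin).to_subtype
  have : Finite G := (finite_iff_finite_and_finiteIndex _).mpr ⟨this, hfi⟩
  exact not_finite G

theorem conj_eq_or_eq_inv_of_normal_zpowers {z : G} (hz : ¬IsOfFinOrder z)
    [hN : (zpowers z).Normal] (g : G) : g * z * g⁻¹ = z ∨ g * z * g⁻¹ = z⁻¹ := by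
  have hconj : zpowers (g * z * g⁻¹) = zpowers z := by
    rw [← MulAut.conj_apply, ← MulEquiv.coe_toMonoidHom, ← MonoidHom.map_zpowers]
    exact hN.conjAct (ConjAct.toConjAct g)
  exact ((zpowers_eq_zpowers_iff hz).mp hconj.symm).imp Eq.symm Eq.symm

theorem Subgroup.index_centralizer_zpowers_le_two {z : G}
    (hconj : ∀ g : G, g * z * g⁻¹ = z ∨ g * z * g⁻¹ = z⁻¹) :
    (centralizer (zpowers z : Set G)).index ≤ 2 := by
  rw [zpowers_eq_closure, centralizer_closure]
  have hindex := MulAction.index_stabilizer (ConjAct G) z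
  rw [ConjAct.stabilizer_eq_centralizer] at hindex
  change (centralizer {z}).index = _ at hindex
  have : MulAction.orbit (ConjAct G) z ⊆ {z, z⁻¹} := by
    rintro _ ⟨g, rfl⟩
    simpa [ConjAct.smul_def] using hconj (ConjAct.ofConjAct g)
  exact hindex ▸ (Set.ncard_le_ncard this (by simp)).trans
    ((Set.ncard_insert_le _ _).trans (by simp))

theorem MonoidHom.exists_surjective_int_ker_eq (f : G →* Multiplicative ℤ) (hf : f ≠ 1) :
    ∃ φ : G →* Multiplicative ℤ, Function.Surjective φ ∧ φ.ker = f.ker := by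
  obtain ⟨g, hg⟩ := DFunLike.ne_iff.mp hf
  have : Infinite f.range :=
    Set.Infinite.to_subtype ((infinite_zpowers.mpr fun h => hg h.eq_one').mono
      (zpowers_le.mpr ⟨g, rfl⟩))
  let ψ : f.range ≃* Multiplicative ℤ := intCyclicMulEquiv.symm
  refine ⟨(ψ : f.range →* Multiplicative ℤ).comp f.rangeRestrict,
    ψ.surjective.comp f.rangeRestrict_surjective, ?_⟩
  rw [MonoidHom.ker_mulEquiv_comp, ker_rangeRestrict]

theorem exists_surjective_int_finite_ker_of_le_center [Infinite G] {Z : Subgroup G}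
    [Z.FiniteIndex] (hZ : Z ≤ center G) (e : Z →* Multiplicative ℤ)
    (he : Function.Injective e) :
    ∃ φ : G →* Multiplicative ℤ, Function.Surjective φ ∧ Finite φ.ker := by
  have hdisj : Disjoint Z e.transfer.ker := by
    refine disjoint_iff_inf_le.mpr fun x ⟨hxZ, hx⟩ => ?_
    -- on the central subgroup `Z`, the transfer is `x ↦ e (x ^ [G : Z])`
    have hpow : e.transfer x = e ⟨x, hxZ⟩ ^ Z.index :=
      (e.transfer_eq_pow x fun k g₀ hk => by
        rw [← mul_right_inj, ← (hZ hk).comm, mul_inv_cancel_right]).trans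
        (map_pow e ⟨x, hxZ⟩ Z.index)
    have : e ⟨x, hxZ⟩ = e 1 := by
      rw [map_one, ← pow_eq_one_iff_left (FiniteIndex.index_ne_zero (H := Z)), ← hpow]
      exact hx
    exact congrArg Subtype.val (he this)
  have hfin := finite_of_disjoint_of_finiteIndex hdisj
  have hne : e.transfer ≠ 1 := by
    intro h
    rw [h, MonoidHom.ker_one] at hfin
    have : Finite G := Finite.of_equiv _ topEquiv.toEquiv
    exact not_finite G
  obtain ⟨φ, hφ, hker⟩ := e.transfer.exists_surjective_int_ker_eq hne
  exact ⟨φ, hφ, hker ▸ hfin⟩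

theorem MonoidHom.mem_ker_iff_isOfFinOrder {A : Type*} [Group A] [IsMulTorsionFree A]
    (φ : G →* A) [Finite φ.ker] {g : G} : g ∈ φ.ker ↔ IsOfFinOrder g :=
  ⟨fun hg => Submonoid.isOfFinOrder_coe.mpr (isOfFinOrder_of_finite (⟨g, hg⟩ : φ.ker)),
    fun hg => (φ.isOfFinOrder hg).eq_one'⟩

theorem Subgroup.normal_map_subtype_of_mem_iff_isOfFinOrder {N : Subgroup G} [hN : N.Normal]
    {K : Subgroup N} (hK : ∀ g, g ∈ K ↔ IsOfFinOrder g) : (K.map N.subtype).Normal where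
  conj_mem := by
    rintro _ ⟨x, hx, rfl⟩ g
    refine ⟨⟨g * x * g⁻¹, hN.conj_mem _ x.2 g⟩, (hK _).mpr ?_, rfl⟩
    exact Submonoid.isOfFinOrder_coe.mp ((isConj_iff.mpr ⟨g, rfl⟩).isOfFinOrder
      (Submonoid.isOfFinOrder_coe.mpr ((hK x).mp hx)))

end

/-- Every infinite virtually cyclic group `E` contains normal subgroups `T ≤ E⁺ ≤ E`
with `[E : E⁺] ≤ 2`, `T` finite, and `E⁺/T ≃ ℤ`. -/
theorem infinite_virtuallyCyclic_structure (E : Type*) [Group E] [Infinite E]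
    (hvc : ∃ H : Subgroup E, IsCyclic H ∧ H.FiniteIndex) :
    ∃ T Ep : Subgroup E, T ≤ Ep ∧ T.Normal ∧ Ep.Normal ∧ Ep.index ≤ 2 ∧
      Finite T ∧ ∃ φ : Ep →* Multiplicative ℤ, Function.Surjective φ ∧
        φ.ker = T.subgroupOf Ep := by
  obtain ⟨H, _, _⟩ := hvc
  obtain ⟨z, hz, _, _⟩ := exists_not_isOfFinOrder_zpowers_normal_finiteIndex H
  have : Infinite (zpowers z) := (infinite_zpowers.mpr hz).to_subtype
  set Ep := centralizer (zpowers z : Set E)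
  have hle : zpowers z ≤ Ep := le_centralizer _
  have : Infinite Ep := Infinite.of_injective _ (inclusion_injective hle)
  let e : (zpowers z).subgroupOf Ep ≃* Multiplicative ℤ :=
    (subgroupOfEquivOfLe hle).trans intCyclicMulEquiv.symm
  obtain ⟨φ, hφ, _⟩ := exists_surjective_int_finite_ker_of_le_center
    (subgroupOf_centralizer_le_center _) e.toMonoidHom e.injective
  exact ⟨φ.ker.map Ep.subtype, Ep, map_subtype_le _,
    normal_map_subtype_of_mem_iff_isOfFinOrder fun _ => φ.mem_ker_iff_isOfFinOrder,
    inferInstance, index_centralizer_zpowers_le_two (conj_eq_or_eq_inv_of_normal_zpowers hz),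
    Finite.of_equiv _ (φ.ker.equivMapOfInjective _ Ep.subtype_injective).toEquiv, φ, hφ,
    (comap_map_eq_self_of_injective Ep.subtype_injective _).symm⟩
end

section
/- For any element g of infinite order in a group G, the set E(g) = {x ∈ G | ∃ n ≥ 1, x g^n x⁻¹ = g^n or x g^n x⁻¹ = g^{-n}} is a subgroup of G, and E⁺(g) = {x | ∃ n ≥ 1, x g^n x⁻¹ = g^n} is a subgroup of index at most 2 in E(g). -/
/-!
For `n ≥ 1`, the elements conjugating `g ^ n` to `g ^ n` or `(g ^ n)⁻¹` form a subgroup, which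
contains the centralizer of `g ^ n` with index at most 2: two elements inverting `g ^ n` multiply
to one centralizing it. Both families only grow when `n` is replaced by a multiple, so `E(g)` and
`E⁺(g)` are directed unions of them, and any two elements of `E(g)` already lie in a common stage.
-/

namespace Subgroup

variable {G : Type*} [Group G]

theorem index_le_two_of_mul_mem {H : Subgroup G}
    (h : ∀ a b, a ∉ H → b ∉ H → a * b ∈ H) : H.index ≤ 2 := by
  by_cases hH : H = ⊤
  · simp [hH]
  obtain ⟨a, ha⟩ : ∃ a, a ∉ H := by simpa [eq_top_iff', not_forall] using hH
  refine (index_eq_two_iff_exists_notMem_and.2 ⟨a, ha, fun b => ?_⟩).le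
  exact or_iff_not_imp_right.2 fun hb => h b a hb ha

theorem relIndex_le_two_of_mul_mem {H K : Subgroup G}
    (h : ∀ a ∈ K, ∀ b ∈ K, a ∉ H → b ∉ H → a * b ∈ H) : H.relIndex K ≤ 2 :=
  index_le_two_of_mul_mem fun a b ha hb =>
    mem_subgroupOf.2 (h a a.2 b b.2 (mt mem_subgroupOf.2 ha) (mt mem_subgroupOf.2 hb))

def conjInvStabilizer (a : G) : Subgroup G where
  carrier := {x | x * a * x⁻¹ = a ∨ x * a * x⁻¹ = a⁻¹}
  one_mem' := by simp
  mul_mem' {x y} hx hy := by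
    have hxy : x * y * a * (x * y)⁻¹ = x * (y * a * y⁻¹) * x⁻¹ := by group
    have hx_inv : x * a⁻¹ * x⁻¹ = (x * a * x⁻¹)⁻¹ := by group
    change x * y * a * (x * y)⁻¹ = a ∨ x * y * a * (x * y)⁻¹ = a⁻¹
    rcases hy with hy | hy
    · rwa [hxy, hy]
    · rw [hxy, hy, hx_inv, inv_eq_iff_eq_inv, inv_inj]
      exact hx.symm
  inv_mem' {x} hx := by
    have h : x⁻¹ * (x * a * x⁻¹) * x = a := by group
    rcases hx with hx | hx <;> rw [hx] at h <;> [left; right] <;> (conv_rhs => rw [← h]) <;> group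

theorem mem_conjInvStabilizer {a x : G} :
    x ∈ conjInvStabilizer a ↔ x * a * x⁻¹ = a ∨ x * a * x⁻¹ = a⁻¹ :=
  Iff.rfl

theorem mem_centralizer_singleton_iff_conj_eq {a x : G} :
    x ∈ centralizer {a} ↔ x * a * x⁻¹ = a := by
  rw [mem_centralizer_singleton_iff, mul_inv_eq_iff_eq_mul]

theorem centralizer_le_conjInvStabilizer (a : G) : centralizer {a} ≤ conjInvStabilizer a :=
  fun _ hx => Or.inl (mem_centralizer_singleton_iff_conj_eq.1 hx)

theorem mul_mem_centralizer_of_notMem {a x y : G} (hx : x ∈ conjInvStabilizer a)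
    (hy : y ∈ conjInvStabilizer a) (hx' : x ∉ centralizer {a}) (hy' : y ∉ centralizer {a}) :
    x * y ∈ centralizer {a} := by
  rw [mem_centralizer_singleton_iff_conj_eq] at hx' hy' ⊢
  calc x * y * a * (x * y)⁻¹ = (x * (y * a * y⁻¹)⁻¹ * x⁻¹)⁻¹ := by group
    _ = a := by rw [hy.resolve_left hy', inv_inv, hx.resolve_left hx', inv_inv]

theorem centralizer_le_centralizer_pow (a : G) (m : ℕ) :
    centralizer {a} ≤ centralizer {a ^ m} := fun x hx => by
  simpa only [mem_centralizer_singleton_iff_conj_eq, ← conj_pow] using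
    congrArg (· ^ m) (mem_centralizer_singleton_iff_conj_eq.1 hx)

theorem conjInvStabilizer_le_pow (a : G) (m : ℕ) :
    conjInvStabilizer a ≤ conjInvStabilizer (a ^ m) := fun x hx => by
  simp only [mem_conjInvStabilizer, ← conj_pow] at hx ⊢
  rcases hx with hx | hx <;> simp [hx]

theorem directed_pnat_pow {Φ : G → Subgroup G} (hΦ : ∀ a (m : ℕ), Φ a ≤ Φ (a ^ m))
    (g : G) : Directed (· ≤ ·) fun n : ℕ+ => Φ (g ^ (n : ℕ)) :=
  fun n m => ⟨n * m, by simpa [pow_mul] using hΦ (g ^ (n : ℕ)) m,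
    by simpa [pow_mul'] using hΦ (g ^ (m : ℕ)) n⟩

theorem mem_iSup_pnat_pow {Φ : G → Subgroup G} (hΦ : ∀ a (m : ℕ), Φ a ≤ Φ (a ^ m))
    {g x : G} :
    x ∈ ⨆ n : ℕ+, Φ (g ^ (n : ℕ)) ↔ ∃ n : ℕ, 1 ≤ n ∧ x ∈ Φ (g ^ n) := by
  rw [mem_iSup_of_directed (directed_pnat_pow hΦ g)]
  exact ⟨fun ⟨n, hn⟩ => ⟨n, n.pos, hn⟩, fun ⟨n, hn, hx⟩ => ⟨⟨n, hn⟩, hx⟩⟩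

end Subgroup

theorem E_is_subgroup_index_two_general (G : Type*) [Group G] (g : G) :
    ∃ S T : Subgroup G,
      (S : Set G) = {x : G | ∃ n : ℕ, 1 ≤ n ∧
        (x * g ^ n * x⁻¹ = g ^ n ∨ x * g ^ n * x⁻¹ = (g ^ n)⁻¹)} ∧
      (T : Set G) = {x : G | ∃ n : ℕ, 1 ≤ n ∧ x * g ^ n * x⁻¹ = g ^ n} ∧
      T ≤ S ∧ T.relIndex S ≤ 2 := by
  refine ⟨⨆ n : ℕ+, Subgroup.conjInvStabilizer (g ^ (n : ℕ)),
    ⨆ n : ℕ+, Subgroup.centralizer {g ^ (n : ℕ)}, ?_, ?_,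
    iSup_mono fun n => Subgroup.centralizer_le_conjInvStabilizer _, ?_⟩
  · ext x
    exact Subgroup.mem_iSup_pnat_pow Subgroup.conjInvStabilizer_le_pow
  · ext x
    exact (Subgroup.mem_iSup_pnat_pow Subgroup.centralizer_le_centralizer_pow).trans
      (exists_congr fun n => and_congr_right' Subgroup.mem_centralizer_singleton_iff_conj_eq)
  have hdir := Subgroup.directed_pnat_pow Subgroup.conjInvStabilizer_le_pow g
  refine Subgroup.relIndex_le_two_of_mul_mem fun x hx y hy hxT hyT => ?_
  obtain ⟨i, hxi⟩ := (Subgroup.mem_iSup_of_directed hdir).1 hx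
  obtain ⟨j, hyj⟩ := (Subgroup.mem_iSup_of_directed hdir).1 hy
  obtain ⟨n, hin, hjn⟩ := hdir i j
  have notMem_stage {z : G} (hz : z ∉ ⨆ n : ℕ+, Subgroup.centralizer {g ^ (n : ℕ)}) :
      z ∉ Subgroup.centralizer {g ^ (n : ℕ)} :=
    fun h => hz (Subgroup.mem_iSup_of_mem n h)
  exact Subgroup.mem_iSup_of_mem n <| Subgroup.mul_mem_centralizer_of_notMem (hin hxi) (hjn hyj)
    (notMem_stage hxT) (notMem_stage hyT)

/-- For `g` of infinite order, `E(g)` is a subgroup and `E⁺(g)` is a subgroup of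
index at most 2 in `E(g)`. -/
theorem E_is_subgroup_index_two (G : Type*) [Group G] (g : G)
    (hg : ¬ IsOfFinOrder g) :
    ∃ S T : Subgroup G,
      (S : Set G) = {x : G | ∃ n : ℕ, 1 ≤ n ∧
        (x * g ^ n * x⁻¹ = g ^ n ∨ x * g ^ n * x⁻¹ = (g ^ n)⁻¹)} ∧
      (T : Set G) = {x : G | ∃ n : ℕ, 1 ≤ n ∧ x * g ^ n * x⁻¹ = g ^ n} ∧
      T ≤ S ∧ T.relIndex S ≤ 2 :=
  E_is_subgroup_index_two_general G g
end
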